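/- arXiv:1207.2008 — 5 statements merged into one kernel-verified Lean document; each statement's English description precedes it below -/
import Mathlib

section
/- Let a,b,c,d range over ℕ∪{∅}. For every n ≥ 1, every choice of parameters a,b,c,d ∈ ℕ∪{∅} and every k ∈ ℕ, the number of up-down permutations σ of length 2n with mmp^{(a,b,c,d)}(σ) = k equals the number of down-up permutations τ of length 2n with mmp^{(b,a,d,c)}(τ) = k, equals the number of down-up permutations τ of length 2n with mmp^{(d,c,b,a)}(τ) = k, and equals the number of up-down permutations σ of length 2n with mmp^{(c,d,a,b)}(σ) = k. (Equivalently, A^{(a,b,c,d)}_{2n}(x) = C^{(b,a,d,c)}_{2n}(x) = C^{(d,c,b,a)}_{2n}(x) = A^{(c,d,a,b)}_{2n}(x).) -/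
/-- A permutation `σ` of `{1,…,n}` (as a permutation of `Fin n`) is up-down if
`σ_1 < σ_2 > σ_3 < σ_4 > ⋯`. -/
def UpDown {n : ℕ} (σ : Equiv.Perm (Fin n)) : Prop :=
  ∀ i : Fin n, ∀ h : i.val + 1 < n,
    if Even i.val then σ i < σ ⟨i.val + 1, h⟩ else σ ⟨i.val + 1, h⟩ < σ i

/-- A permutation is down-up if `σ_1 > σ_2 < σ_3 > σ_4 < ⋯`. -/
def DownUp {n : ℕ} (σ : Equiv.Perm (Fin n)) : Prop :=
  ∀ i : Fin n, ∀ h : i.val + 1 < n,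
    if Even i.val then σ ⟨i.val + 1, h⟩ < σ i else σ i < σ ⟨i.val + 1, h⟩

/-- The condition placed on the number `c` of points in a quadrant by a parameter
`p ∈ ℕ ∪ {∅}` (here `none` plays the role of `∅`): `c ≥ a` if `p = some a`,
and `c = 0` if `p = none`. -/
def QuadOK : Option ℕ → ℕ → Prop
  | some a, c => a ≤ c
  | none, c => c = 0

/-- `σ_i` matches the quadrant marked mesh pattern `MMP(a,b,c,d)` in `σ`. -/
def MatchesMMP (a b c d : Option ℕ) {n : ℕ} (σ : Equiv.Perm (Fin n)) (i : Fin n) : Prop :=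
  QuadOK a {j : Fin n | i < j ∧ σ i < σ j}.ncard ∧
  QuadOK b {j : Fin n | j < i ∧ σ i < σ j}.ncard ∧
  QuadOK c {j : Fin n | j < i ∧ σ j < σ i}.ncard ∧
  QuadOK d {j : Fin n | i < j ∧ σ j < σ i}.ncard

/-- `mmp^{(a,b,c,d)}(σ)`: the number of indices `i` such that `σ_i` matches
`MMP(a,b,c,d)` in `σ`. -/
noncomputable def mmp (a b c d : Option ℕ) {n : ℕ} (σ : Equiv.Perm (Fin n)) : ℕ :=
  {i : Fin n | MatchesMMP a b c d σ i}.ncard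

/-!
Reversal `σ ↦ σ ∘ rev` and complementation `σ ↦ rev ∘ σ` are involutions of the permutations
of `Fin n`. Complementation exchanges up-down and down-up permutations and turns the quadrants
`(a,b,c,d)` of a point into `(d,c,b,a)`; for even `n`, reversal also exchanges up-down and
down-up permutations and turns them into `(b,a,d,c)`. Counting along these bijections gives
`A^{(a,b,c,d)}_{2n} = C^{(b,a,d,c)}_{2n} = C^{(d,c,b,a)}_{2n}`, and complementing the middle term
gives `A^{(c,d,a,b)}_{2n}`.
-/

open Equiv

theorem Set.ncard_preimage_equiv {α β : Type*} (e : α ≃ β) (s : Set β) :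
    (e ⁻¹' s).ncard = s.ncard :=
  Set.ncard_preimage_of_injective_subset_range e.injective (by simp)

theorem Fin.revPerm_mul_self {n : ℕ} : (Fin.revPerm : Perm (Fin n)) * Fin.revPerm = 1 :=
  Perm.ext Fin.rev_rev

variable {n : ℕ} (σ : Perm (Fin n)) (a b c d : Option ℕ)

theorem upDown_revPerm_mul_iff : UpDown (Fin.revPerm * σ) ↔ DownUp σ := by
  refine forall₂_congr fun i _ => ?_
  simp only [Perm.mul_apply, Fin.revPerm_apply]
  split_ifs <;> exact Fin.rev_lt_rev

theorem downUp_revPerm_mul_iff : DownUp (Fin.revPerm * σ) ↔ UpDown σ := by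
  refine forall₂_congr fun i _ => ?_
  simp only [Perm.mul_apply, Fin.revPerm_apply]
  split_ifs <;> exact Fin.rev_lt_rev

theorem downUp_of_upDown_mul_revPerm (hn : Even n) (h : UpDown (σ * Fin.revPerm)) :
    DownUp σ := by
  intro i hi
  have hj : n - (i.val + 2) + 1 < n := by omega
  have e₁ : Fin.rev ⟨n - (i.val + 2), by omega⟩ = ⟨i.val + 1, hi⟩ := by
    ext; simp only [Fin.val_rev]; omega
  have e₂ : Fin.rev ⟨n - (i.val + 2) + 1, hj⟩ = i := by
    ext; simp only [Fin.val_rev]; omega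
  have parity : Even (n - (i.val + 2)) ↔ Even i.val := by
    obtain ⟨m, rfl⟩ := hn
    simp only [Nat.even_iff]
    omega
  simpa only [Perm.mul_apply, Fin.revPerm_apply, e₁, e₂, parity] using
    h ⟨n - (i.val + 2), by omega⟩ hj

theorem downUp_mul_revPerm_iff (hn : Even n) : DownUp (σ * Fin.revPerm) ↔ UpDown σ := by
  constructor
  · intro h
    rw [← upDown_revPerm_mul_iff, ← mul_assoc] at h
    rw [← downUp_revPerm_mul_iff]
    exact downUp_of_upDown_mul_revPerm _ hn h
  · intro h
    refine downUp_of_upDown_mul_revPerm _ hn ?_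
    rwa [mul_assoc, Fin.revPerm_mul_self, mul_one]

theorem matchesMMP_revPerm_mul_iff (i : Fin n) :
    MatchesMMP a b c d (Fin.revPerm * σ) i ↔ MatchesMMP d c b a σ i := by
  simp only [MatchesMMP, Perm.mul_apply, Fin.revPerm_apply, Fin.rev_lt_rev]
  tauto

theorem mmp_revPerm_mul :
    mmp a b c d (Fin.revPerm * σ) = mmp d c b a σ := by
  simp only [mmp, matchesMMP_revPerm_mul_iff]

theorem matchesMMP_mul_revPerm_iff (i : Fin n) :
    MatchesMMP a b c d (σ * Fin.revPerm) i.rev ↔ MatchesMMP b a d c σ i := by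
  have ncard_rev (p : Fin n → Prop) : {j : Fin n | p j.rev}.ncard = {j | p j}.ncard :=
    Set.ncard_preimage_equiv Fin.revPerm {j | p j}
  simp only [MatchesMMP, Perm.mul_apply, Fin.revPerm_apply, Fin.rev_rev, Fin.lt_rev_iff,
    Fin.rev_lt_iff (i := i)]
  rw [ncard_rev fun j => j < i ∧ σ i < σ j, ncard_rev fun j => i < j ∧ σ i < σ j,
    ncard_rev fun j => i < j ∧ σ j < σ i, ncard_rev fun j => j < i ∧ σ j < σ i]
  tauto

theorem mmp_mul_revPerm :
    mmp a b c d (σ * Fin.revPerm) = mmp b a d c σ := by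
  rw [mmp, ← Set.ncard_preimage_equiv Fin.revPerm]
  simp only [Set.preimage_ofPred_eq, Fin.revPerm_apply, matchesMMP_mul_revPerm_iff]
  rfl

noncomputable def upDownCount (a b c d : Option ℕ) (n k : ℕ) : ℕ :=
  {σ : Perm (Fin n) | UpDown σ ∧ mmp a b c d σ = k}.ncard

noncomputable def downUpCount (a b c d : Option ℕ) (n k : ℕ) : ℕ :=
  {τ : Perm (Fin n) | DownUp τ ∧ mmp a b c d τ = k}.ncard

variable (k : ℕ)

theorem upDownCount_eq_downUpCount_of_even (hn : Even n) :
    upDownCount a b c d n k = downUpCount b a d c n k := by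
  rw [downUpCount, ← Set.ncard_preimage_equiv (Equiv.mulRight Fin.revPerm)]
  simp only [Set.preimage_ofPred_eq, coe_mulRight, downUp_mul_revPerm_iff _ hn, mmp_mul_revPerm]
  rfl

theorem upDownCount_eq_downUpCount : upDownCount a b c d n k = downUpCount d c b a n k := by
  rw [downUpCount, ← Set.ncard_preimage_equiv (Equiv.mulLeft Fin.revPerm)]
  simp only [Set.preimage_ofPred_eq, coe_mulLeft, downUp_revPerm_mul_iff, mmp_revPerm_mul]
  rfl

theorem downUpCount_eq_upDownCount : downUpCount a b c d n k = upDownCount d c b a n k := by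
  rw [upDownCount, ← Set.ncard_preimage_equiv (Equiv.mulLeft Fin.revPerm)]
  simp only [Set.preimage_ofPred_eq, coe_mulLeft, upDown_revPerm_mul_iff, mmp_revPerm_mul]
  rfl

theorem stmt0_general (n : ℕ) (a b c d : Option ℕ) (k : ℕ) :
    {σ : Equiv.Perm (Fin (2*n)) | UpDown σ ∧ mmp a b c d σ = k}.ncard
      = {τ : Equiv.Perm (Fin (2*n)) | DownUp τ ∧ mmp b a d c τ = k}.ncard ∧
    {σ : Equiv.Perm (Fin (2*n)) | UpDown σ ∧ mmp a b c d σ = k}.ncard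
      = {τ : Equiv.Perm (Fin (2*n)) | DownUp τ ∧ mmp d c b a τ = k}.ncard ∧
    {σ : Equiv.Perm (Fin (2*n)) | UpDown σ ∧ mmp a b c d σ = k}.ncard
      = {σ : Equiv.Perm (Fin (2*n)) | UpDown σ ∧ mmp c d a b σ = k}.ncard := by
  have reversal := upDownCount_eq_downUpCount_of_even a b c d k (even_two_mul n)
  exact ⟨reversal, upDownCount_eq_downUpCount a b c d k,
    reversal.trans (downUpCount_eq_upDownCount b a d c k)⟩

theorem stmt0 (n : ℕ) (hn : 1 ≤ n) (a b c d : Option ℕ) (k : ℕ) :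
    {σ : Equiv.Perm (Fin (2*n)) | UpDown σ ∧ mmp a b c d σ = k}.ncard
      = {τ : Equiv.Perm (Fin (2*n)) | DownUp τ ∧ mmp b a d c τ = k}.ncard ∧
    {σ : Equiv.Perm (Fin (2*n)) | UpDown σ ∧ mmp a b c d σ = k}.ncard
      = {τ : Equiv.Perm (Fin (2*n)) | DownUp τ ∧ mmp d c b a τ = k}.ncard ∧
    {σ : Equiv.Perm (Fin (2*n)) | UpDown σ ∧ mmp a b c d σ = k}.ncard
      = {σ : Equiv.Perm (Fin (2*n)) | UpDown σ ∧ mmp c d a b σ = k}.ncard :=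
  stmt0_general n a b c d k
end

section
/- For every n ≥ 1, the number of up-down permutations σ of length 2n with mmp^{(1,0,∅,0)}(σ) = 1 equals the number of up-down permutations of length 2n−1. (Equivalently, the coefficient of x in A^{(1,0,∅,0)}_{2n}(x) is B_{2n−1}(1).) -/
/-- `σ_i` matches `MMP(1,0,∅,0)`: there exists `j > i` with `σ_j > σ_i` and
there is no `j < i` with `σ_j < σ_i`. -/
def Matches1 {n : ℕ} (σ : Equiv.Perm (Fin n)) (i : Fin n) : Prop :=
  (∃ j, i < j ∧ σ i < σ j) ∧ ¬ ∃ j, j < i ∧ σ j < σ i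

/-- `mmp^{(1,0,∅,0)}(σ)`: the number of indices matching `MMP(1,0,∅,0)` in `σ`. -/
noncomputable def mmp1 {n : ℕ} (σ : Equiv.Perm (Fin n)) : ℕ :=
  {i : Fin n | Matches1 σ i}.ncard

/-- The number of up-down permutations of length `m`. -/
noncomputable def UDcount (m : ℕ) : ℕ := {σ : Equiv.Perm (Fin m) | UpDown σ}.ncard

/-! In an up-down permutation of even length, position 0 always matches, and so does the position
of the value 0: every later entry is larger, and it is not the last position because the last step
is an ascent. Once `σ 0 = 0`, no other position matches. So `mmp1 σ = 1` exactly when `σ` starts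
with its minimum; deleting that minimum gives a down-up permutation of odd length, and composing
with `Fin.rev` turns down-up permutations into up-down ones. -/

open Equiv

section Matches

variable {n : ℕ} {σ : Perm (Fin (n + 1))}

lemma matches1_symm_apply_zero (hlast : σ (Fin.last n) ≠ 0) : Matches1 σ (σ.symm 0) := by
  obtain ⟨p, hp⟩ := Fin.exists_castSucc_eq.mpr
    (fun h : σ.symm 0 = Fin.last n => hlast (by rw [← h, σ.apply_symm_apply]))
  have hσp : σ p.castSucc = 0 := by rw [hp, σ.apply_symm_apply]
  refine ⟨⟨p.succ, hp ▸ p.castSucc_lt_succ, ?_⟩, fun ⟨j, _, hj⟩ => ?_⟩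
  · rw [σ.apply_symm_apply, Fin.pos_iff_ne_zero, ← hσp, σ.injective.ne_iff]
    exact Fin.castSucc_lt_succ.ne'
  · rw [σ.apply_symm_apply] at hj
    exact Fin.not_lt_zero _ hj

lemma eq_zero_of_matches1 (h0 : σ 0 = 0) {i : Fin (n + 1)} (hi : Matches1 σ i) : i = 0 := by
  by_contra hne
  refine hi.2 ⟨0, Fin.pos_iff_ne_zero.mpr hne, ?_⟩
  rw [h0, Fin.pos_iff_ne_zero, ← h0, σ.injective.ne_iff]
  exact hne

lemma mmp1_eq_one_iff (h0 : Matches1 σ 0) (hlast : σ (Fin.last n) ≠ 0) :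
    mmp1 σ = 1 ↔ σ 0 = 0 := by
  constructor
  · intro h
    obtain ⟨a, ha⟩ := Set.ncard_eq_one.mp h
    have h0a : (0 : Fin (n + 1)) = a := by simpa [ha] using (show 0 ∈ {i | Matches1 σ i} from h0)
    have hpa : σ.symm 0 = a := by
      simpa [ha] using (show σ.symm 0 ∈ {i | Matches1 σ i} from matches1_symm_apply_zero hlast)
    exact (σ.symm_apply_eq.mp (hpa.trans h0a.symm)).symm
  · intro hσ0
    have : {i | Matches1 σ i} = {0} :=
      Set.eq_singleton_iff_unique_mem.mpr ⟨h0, fun _ => eq_zero_of_matches1 hσ0⟩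
    rw [mmp1, this, Set.ncard_singleton]

end Matches

lemma UpDown.matches1_zero {n : ℕ} {σ : Perm (Fin (n + 2))} (hσ : UpDown σ) : Matches1 σ 0 :=
  ⟨⟨1, Fin.zero_lt_one, by simpa using hσ 0 (by simp)⟩, fun ⟨j, hj, _⟩ => Fin.not_lt_zero j hj⟩

lemma UpDown.apply_last_ne_zero {k : ℕ} {σ : Perm (Fin (2 * k + 1 + 1))} (hσ : UpDown σ) :
    σ (Fin.last _) ≠ 0 := by
  have h := hσ ⟨2 * k, by omega⟩ (by simp)
  rw [if_pos (even_two_mul k)] at h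
  exact ((Fin.zero_le _).trans_lt h).ne'

lemma downUp_iff_upDown_revPerm_mul {n : ℕ} (τ : Perm (Fin n)) :
    DownUp τ ↔ UpDown (Fin.revPerm * τ) := by
  simp only [DownUp, UpDown, Perm.mul_apply, Fin.revPerm_apply, Fin.rev_lt_rev]

lemma ncard_downUp_eq_UDcount (n : ℕ) : {τ : Perm (Fin n) | DownUp τ}.ncard = UDcount n := by
  have : {τ : Perm (Fin n) | DownUp τ} = (Fin.revPerm * ·) ⁻¹' {σ | UpDown σ} := by
    ext τ
    exact downUp_iff_upDown_revPerm_mul τ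
  rw [this, UDcount, Set.ncard_preimage_of_injective_subset_range (mul_right_injective _)
    (by simp [(mul_left_surjective _).range_eq])]

lemma upDown_decomposeFin_symm_zero_iff {m : ℕ} (τ : Perm (Fin m)) :
    UpDown (Perm.decomposeFin.symm (0, τ)) ↔ DownUp τ := by
  set σ := Perm.decomposeFin.symm (0, τ) with hσ
  have hσ0 : σ 0 = 0 := by simp [hσ]
  have hσs : ∀ i, σ i.succ = (τ i).succ := by simp [hσ]
  rw [UpDown, Fin.forall_fin_succ]
  refine (and_iff_right fun h => ?_).trans (forall_congr' fun j => ?_)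
  · rw [if_pos (by simp), hσ0]
    exact (hσs ⟨0, by simpa using h⟩).symm ▸ Fin.succ_pos _
  · have hnext : ∀ h : j.val + 1 < m, σ ⟨j.val + 1 + 1, by simpa using h⟩ = (τ ⟨j + 1, h⟩).succ :=
      fun h => hσs ⟨j + 1, h⟩
    simp only [Fin.val_succ, Nat.even_add_one, ite_not]
    constructor
    · intro H h
      have := H (by omega)
      rw [hnext h, hσs, Fin.succ_lt_succ_iff, Fin.succ_lt_succ_iff] at this
      exact this
    · intro H h
      have := H (by omega)
      rw [hnext (by omega), hσs, Fin.succ_lt_succ_iff, Fin.succ_lt_succ_iff]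
      exact this

lemma ncard_upDown_apply_zero_eq_zero (m : ℕ) :
    {σ : Perm (Fin (m + 1)) | UpDown σ ∧ σ 0 = 0}.ncard = {τ : Perm (Fin m) | DownUp τ}.ncard := by
  have himage : {σ : Perm (Fin (m + 1)) | UpDown σ ∧ σ 0 = 0}
      = (fun τ => Perm.decomposeFin.symm (0, τ)) '' {τ | DownUp τ} := by
    ext σ
    obtain ⟨⟨p, τ⟩, rfl⟩ := Perm.decomposeFin.symm.surjective σ
    simp only [Set.mem_ofPred_eq, Set.mem_image, Perm.decomposeFin_symm_apply_zero,
      Perm.decomposeFin.symm.injective.eq_iff, Prod.mk.injEq]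
    constructor
    · rintro ⟨hσ, rfl⟩
      exact ⟨τ, (upDown_decomposeFin_symm_zero_iff τ).mp hσ, rfl, rfl⟩
    · rintro ⟨τ, hτ, rfl, rfl⟩
      exact ⟨(upDown_decomposeFin_symm_zero_iff τ).mpr hτ, rfl⟩
  rw [himage]
  exact Set.ncard_image_of_injective _
    (Perm.decomposeFin.symm.injective.comp (Prod.mk_right_injective 0))

lemma ncard_upDown_mmp1_eq_one (k : ℕ) :
    {σ : Perm (Fin (2 * k + 1 + 1)) | UpDown σ ∧ mmp1 σ = 1}.ncard = UDcount (2 * k + 1) := by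
  have : {σ : Perm (Fin (2 * k + 1 + 1)) | UpDown σ ∧ mmp1 σ = 1}
      = {σ | UpDown σ ∧ σ 0 = 0} := by
    ext σ
    exact and_congr_right fun hσ => mmp1_eq_one_iff hσ.matches1_zero hσ.apply_last_ne_zero
  rw [this, ncard_upDown_apply_zero_eq_zero, ncard_downUp_eq_UDcount]

theorem stmt7 (n : ℕ) (hn : 1 ≤ n) :
    {σ : Equiv.Perm (Fin (2*n)) | UpDown σ ∧ mmp1 σ = 1}.ncard = UDcount (2*n - 1) := by
  obtain ⟨k, rfl⟩ : ∃ k, n = k + 1 := ⟨n - 1, by omega⟩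
  exact ncard_upDown_mmp1_eq_one k
end

section
/- For every n ≥ 1, the number of down-up permutations σ of length 2n+1 with mmp^{(1,0,∅,0)}(σ) = 1 equals the number of up-down permutations of length 2n−1. (Equivalently, the coefficient of x in D^{(1,0,∅,0)}_{2n+1}(x) is B_{2n−1}(1).) -/
open Equiv

section Alternation
variable {N : ℕ} {σ : Perm (Fin N)}

theorem DownUp.apply_succ_lt_of_even (hσ : DownUp σ) {i : ℕ} (h : i + 1 < N) (hi : Even i) :
    σ ⟨i + 1, h⟩ < σ ⟨i, by omega⟩ := by
  simpa [hi] using hσ ⟨i, by omega⟩ h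

theorem DownUp.apply_lt_succ_of_odd (hσ : DownUp σ) {i : ℕ} (h : i + 1 < N) (hi : Odd i) :
    σ ⟨i, by omega⟩ < σ ⟨i + 1, h⟩ := by
  simpa [Nat.not_even_iff_odd.2 hi] using hσ ⟨i, by omega⟩ h

end Alternation

section Matches
variable {N : ℕ} {σ : Perm (Fin (N + 1))}

theorem not_matches1_of_apply_eq_last {i : Fin (N + 1)} (h : σ i = Fin.last N) :
    ¬ Matches1 σ i := by
  rintro ⟨⟨j, -, hj⟩, -⟩
  exact (Fin.le_last (σ j)).not_gt (h ▸ hj)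

theorem matches1_zero_of_apply_ne_last (h : σ 0 ≠ Fin.last N) : Matches1 σ 0 := by
  refine ⟨⟨σ.symm (Fin.last N), ?_, ?_⟩, fun ⟨j, hj, _⟩ => Fin.not_lt_zero j hj⟩
  · exact Fin.pos_iff_ne_zero.2 fun h0 => h (by simpa using congrArg σ h0.symm)
  · simpa using lt_of_le_of_ne (Fin.le_last _) h

theorem matches1_of_apply_eq_zero {k : Fin (N + 1)} (h : σ k = 0) (hk : k ≠ Fin.last N) :
    Matches1 σ k := by
  have hk' : k.val + 1 < N + 1 := by
    have := Fin.val_lt_last hk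
    omega
  refine ⟨⟨⟨k.val + 1, hk'⟩, Fin.lt_def.2 (by simp), ?_⟩, fun ⟨j, _, hj⟩ => ?_⟩
  · rw [h, Fin.pos_iff_ne_zero, ← h, Ne, σ.injective.eq_iff, Fin.ext_iff]
    simp
  · exact Fin.not_lt_zero _ (h ▸ hj)

theorem Matches1.le_of_apply_eq_zero {i k : Fin (N + 1)} (hi : Matches1 σ i) (h : σ k = 0) :
    i ≤ k := by
  by_contra! hki
  refine hi.2 ⟨k, hki, ?_⟩
  rw [h, Fin.pos_iff_ne_zero, ← h, Ne, σ.injective.eq_iff]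
  exact hki.ne'

end Matches

section MmpOne
variable {m : ℕ} {σ : Perm (Fin (m + 2))}

theorem DownUp.matches1_one (hσ : DownUp σ) (hm : 1 ≤ m) : Matches1 σ 1 := by
  have h10 := hσ.apply_succ_lt_of_even (i := 0) (by omega) (by decide)
  have h12 := hσ.apply_lt_succ_of_odd (i := 1) (by omega) odd_one
  refine ⟨⟨⟨2, by omega⟩, Fin.lt_def.2 (by simp), h12⟩, ?_⟩
  rintro ⟨j, hj, hj1⟩
  obtain rfl : j = 0 := Fin.ext (by simp [Fin.lt_def] at hj; omega)
  exact h10.not_gt hj1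

theorem DownUp.apply_last_ne_zero (hσ : DownUp σ) (hm : Odd m) : σ (Fin.last (m + 1)) ≠ 0 :=
  Fin.pos_iff_ne_zero.1 ((Fin.zero_le _).trans_lt (hσ.apply_lt_succ_of_odd (by omega) hm))

theorem DownUp.mmp1_eq_one_iff (hσ : DownUp σ) (hm : Odd m) :
    mmp1 σ = 1 ↔ σ 0 = Fin.last (m + 1) ∧ σ 1 = 0 := by
  have hm1 : 1 ≤ m := hm.pos
  constructor
  · intro h
    obtain ⟨a, ha⟩ := Set.ncard_eq_one.1 h
    have matches_iff (i : Fin (m + 2)) : Matches1 σ i ↔ i = a := by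
      rw [← Set.mem_singleton_iff, ← ha, Set.mem_ofPred_eq]
    obtain rfl : 1 = a := (matches_iff 1).1 (hσ.matches1_one hm1)
    constructor
    · by_contra h0
      exact absurd ((matches_iff 0).1 (matches1_zero_of_apply_ne_last h0)) (by simp)
    · obtain ⟨k, hσk⟩ : ∃ k, σ k = 0 := ⟨σ.symm 0, σ.apply_symm_apply 0⟩
      have hk_ne : k ≠ Fin.last (m + 1) := by
        rintro hlast
        exact hσ.apply_last_ne_zero hm (hlast ▸ hσk)
      rw [← (matches_iff k).1 (matches1_of_apply_eq_zero hσk hk_ne), hσk]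
  · rintro ⟨h0, h1⟩
    suffices {i | Matches1 σ i} = {1} by rw [mmp1, this, Set.ncard_singleton]
    ext i
    refine ⟨fun hi => ?_, fun hi => (Set.mem_singleton_iff.1 hi) ▸ hσ.matches1_one hm1⟩
    have hi0 : i ≠ 0 := by
      rintro rfl
      exact not_matches1_of_apply_eq_last h0 hi
    have hi1 : i ≤ 1 := Matches1.le_of_apply_eq_zero hi h1
    rw [Set.mem_singleton_iff]
    rw [Fin.le_def, Fin.val_one] at hi1
    rw [Ne, Fin.ext_iff, Fin.val_zero] at hi0
    exact Fin.ext (by rw [Fin.val_one]; omega)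

end MmpOne

section PrependMaxMin
variable {m : ℕ}

def prependMaxMinFun (τ : Perm (Fin m)) : Fin (m + 2) → Fin (m + 2)
  | ⟨0, _⟩ => Fin.last (m + 1)
  | ⟨1, _⟩ => 0
  | ⟨i + 2, hi⟩ => ⟨m - (τ ⟨i, by omega⟩).val, by omega⟩

theorem prependMaxMinFun_injective (τ : Perm (Fin m)) :
    Function.Injective (prependMaxMinFun τ) := by
  rintro ⟨_ | _ | i, hi⟩ ⟨_ | _ | j, hj⟩ h <;>
    simp only [prependMaxMinFun, Fin.ext_iff, Fin.val_last, Fin.val_zero] at h ⊢ <;>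
    grind [Fin.val_inj, Equiv.apply_eq_iff_eq]

noncomputable def prependMaxMin (τ : Perm (Fin m)) : Perm (Fin (m + 2)) :=
  Equiv.ofBijective _ (prependMaxMinFun_injective τ).bijective_of_finite

@[simp]
theorem prependMaxMin_apply_zero (τ : Perm (Fin m)) : prependMaxMin τ 0 = Fin.last (m + 1) :=
  rfl

@[simp]
theorem prependMaxMin_apply_one (τ : Perm (Fin m)) : prependMaxMin τ 1 = 0 :=
  rfl

theorem prependMaxMin_apply_add_two_val (τ : Perm (Fin m)) {i : ℕ} (hi : i + 2 < m + 2) :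
    (prependMaxMin τ ⟨i + 2, hi⟩).val = m - (τ ⟨i, by omega⟩).val :=
  rfl

theorem prependMaxMin_injective : Function.Injective (prependMaxMin (m := m)) := by
  intro τ τ' h
  ext i
  have hi := congrArg Fin.val (DFunLike.congr_fun h ⟨i + 2, by omega⟩)
  simp only [prependMaxMin_apply_add_two_val, Fin.eta] at hi
  have := (τ i).isLt
  have := (τ' i).isLt
  omega

theorem downUp_prependMaxMin_iff (τ : Perm (Fin m)) : DownUp (prependMaxMin τ) ↔ UpDown τ := by
  constructor
  · intro h i hi
    have key := h ⟨i + 2, by omega⟩ (by simp only; omega)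
    simp only [Fin.lt_def, prependMaxMin_apply_add_two_val, Nat.even_add_one, not_not,
      Fin.eta] at key ⊢
    have := (τ i).isLt
    have := (τ ⟨i + 1, hi⟩).isLt
    split_ifs at key ⊢ <;> omega
  · rintro h ⟨_ | _ | k, hk⟩ hk1
    · simp [Fin.lt_def]
    · have hm : 1 ≤ m := by simp only at hk1; omega
      have h2 := prependMaxMin_apply_add_two_val τ (i := 0) (by omega)
      have := (τ ⟨0, hm⟩).isLt
      simp only [Fin.lt_def, Nat.even_add_one, Even.zero]
      exact h2 ▸ (by omega : 0 < m - (τ ⟨0, hm⟩).val)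
    · have key := h ⟨k, by omega⟩ (by simp only at hk1 ⊢; omega)
      simp only [Fin.lt_def, prependMaxMin_apply_add_two_val, Nat.even_add_one, not_not] at key ⊢
      have := (τ ⟨k, by omega⟩).isLt
      have := (τ ⟨k + 1, by simp only at hk1 ⊢; omega⟩).isLt
      split_ifs at key ⊢ <;> omega

theorem exists_prependMaxMin_eq {σ : Perm (Fin (m + 2))} (h0 : σ 0 = Fin.last (m + 1))
    (h1 : σ 1 = 0) : ∃ τ, prependMaxMin τ = σ := by
  have bounds (i : ℕ) (hi : i + 2 < m + 2) :
      1 ≤ (σ ⟨i + 2, hi⟩).val ∧ (σ ⟨i + 2, hi⟩).val ≤ m := by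
    have ne_one : σ ⟨i + 2, hi⟩ ≠ σ 1 := σ.injective.ne (by simp [Fin.ext_iff])
    have ne_zero : σ ⟨i + 2, hi⟩ ≠ σ 0 := σ.injective.ne (by simp [Fin.ext_iff])
    rw [h1, Ne, Fin.ext_iff, Fin.val_zero] at ne_one
    rw [h0, Ne, Fin.ext_iff, Fin.val_last] at ne_zero
    have := (σ ⟨i + 2, hi⟩).isLt
    omega
  let f (i : Fin m) : Fin m :=
    ⟨m - (σ ⟨i + 2, by omega⟩).val, by have := bounds i (by omega); omega⟩
  have hf : Function.Injective f := by
    intro i j hij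
    have hi := bounds i (by omega)
    have hj := bounds j (by omega)
    have := σ.injective (Fin.ext (by simp only [f, Fin.ext_iff] at hij; omega) :
      σ ⟨i + 2, by omega⟩ = σ ⟨j + 2, by omega⟩)
    simpa [Fin.ext_iff] using this
  refine ⟨Equiv.ofBijective f hf.bijective_of_finite, ?_⟩
  ext ⟨_ | _ | k, hk⟩
  · simp [h0]
  · simp [h1]
  · change _ = (σ ⟨k + 2, hk⟩).val
    rw [prependMaxMin_apply_add_two_val]
    have := bounds k hk
    simp only [Equiv.ofBijective_apply, f]
    omega

end PrependMaxMin

theorem setOf_downUp_mmp1_eq_one_eq_image {m : ℕ} (hm : Odd m) :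
    {σ : Perm (Fin (m + 2)) | DownUp σ ∧ mmp1 σ = 1} = prependMaxMin '' {τ | UpDown τ} := by
  ext σ
  constructor
  · rintro ⟨hσ, h⟩
    obtain ⟨h0, h1⟩ := (hσ.mmp1_eq_one_iff hm).1 h
    obtain ⟨τ, rfl⟩ := exists_prependMaxMin_eq h0 h1
    exact ⟨τ, (downUp_prependMaxMin_iff τ).1 hσ, rfl⟩
  · rintro ⟨τ, hτ, rfl⟩
    have hσ := (downUp_prependMaxMin_iff τ).2 hτ
    exact ⟨hσ, (hσ.mmp1_eq_one_iff hm).2 ⟨prependMaxMin_apply_zero τ, prependMaxMin_apply_one τ⟩⟩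

theorem stmt10 (n : ℕ) (hn : 1 ≤ n) :
    {σ : Equiv.Perm (Fin (2*n+1)) | DownUp σ ∧ mmp1 σ = 1}.ncard
      = UDcount (2*n - 1) := by
  have hm : Odd (2 * n - 1) := ⟨n - 1, by omega⟩
  rw [show 2 * n + 1 = 2 * n - 1 + 2 by omega, setOf_downUp_mmp1_eq_one_eq_image hm,
    Set.ncard_image_of_injective _ prependMaxMin_injective, UDcount]
end

section
/- For every n ≥ 1: every up-down permutation σ of length 2n+1 satisfies mmp^{(1,0,∅,0)}(σ) ≤ n, and the number of up-down permutations σ of length 2n+1 with mmp^{(1,0,∅,0)}(σ) = n equals (n+1)·(2n−1)!!. (Equivalently, the highest power of x appearing in B^{(1,0,∅,0)}_{2n+1}(x) is x^n, with coefficient (n+1)·(2n−1)!!.) -/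
/-- The odd double factorial `(2n−1)!! = ∏_{i=1}^{n} (2i−1)`. -/
def oddDF (n : ℕ) : ℕ := ∏ i ∈ Finset.range n, (2*i+1)

/-- The even double factorial `(2n)!! = ∏_{i=1}^{n} 2i`. -/
def evenDF (n : ℕ) : ℕ := ∏ i ∈ Finset.range n, (2*i+2)
/-!
In an up-down permutation of length `2n + 1` only the valleys `σ_1, σ_3, …, σ_{2n-1}` can
match `MMP(1,0,∅,0)`: a peak has a smaller left neighbour and the last entry has nothing to
its right. Hence the statistic is at most `n`, with equality iff these `n` valleys decrease. Such
a permutation is the same as its last entry `w` together with a perfect matching of the other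
`2n` values, listed as pairs (valley, peak) by decreasing valley, in which the least value is
matched to some partner above `w`. Matchings with a prescribed partner of the least element number
`(2n - 3)!!`, and summing the number of admissible partners over `w` gives `(n + 1)(2n - 1)`.
-/

open Finset Function

section Positions

variable {n : ℕ}

def valley (k : Fin (n + 1)) : Fin (2 * n + 1) := ⟨2 * k, by omega⟩

def peak (k : Fin n) : Fin (2 * n + 1) := ⟨2 * k + 1, by omega⟩

@[simp] theorem val_valley (k : Fin (n + 1)) : (valley k).val = 2 * k := rfl

@[simp] theorem val_peak (k : Fin n) : (peak k).val = 2 * k + 1 := rfl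

theorem valley_or_peak (i : Fin (2 * n + 1)) : (∃ k, valley k = i) ∨ ∃ k, peak k = i := by
  rcases Nat.even_or_odd' i.1 with ⟨k, hk | hk⟩
  · exact Or.inl ⟨⟨k, by omega⟩, Fin.ext hk.symm⟩
  · exact Or.inr ⟨⟨k, by omega⟩, Fin.ext hk.symm⟩

theorem valley_strictMono : StrictMono (valley (n := n)) := fun k l hkl => by
  rw [Fin.lt_def] at hkl ⊢
  simp only [val_valley]
  omega

theorem valley_castSucc_lt_peak (k : Fin n) : valley k.castSucc < peak k := by
  simp [Fin.lt_def]

end Positions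

theorem upDown_iff {n : ℕ} {σ : Equiv.Perm (Fin (2 * n + 1))} :
    UpDown σ ↔ ∀ k, σ (valley k.castSucc) < σ (peak k) ∧ σ (valley k.succ) < σ (peak k) := by
  constructor
  · intro hσ k
    have h0 := hσ (valley k.castSucc) (by simp)
    have h1 := hσ (peak k) (by simp; omega)
    rw [if_pos (by simp)] at h0
    rw [if_neg (by simp)] at h1
    exact ⟨h0, by convert h1 using 2; ext; simp; ring⟩
  · intro h i hi
    rcases valley_or_peak i with ⟨k, rfl⟩ | ⟨k, rfl⟩
    · obtain ⟨k, rfl⟩ : ∃ l : Fin n, l.castSucc = k :=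
        Fin.exists_castSucc_eq.mpr fun hk => by simp [hk] at hi
      rw [if_pos (by simp)]
      exact (h k).1
    · rw [if_neg (by simp)]
      convert (h k).2 using 2
      ext; simp; ring

namespace UpDown

variable {n : ℕ} {σ : Equiv.Perm (Fin (2 * n + 1))}

theorem exists_valley_eq_of_matches1 (hσ : UpDown σ) {i : Fin (2 * n + 1)}
    (h : Matches1 σ i) : ∃ k : Fin n, valley k.castSucc = i := by
  obtain ⟨⟨j, hij, -⟩, hmin⟩ := h
  rcases valley_or_peak i with ⟨k, rfl⟩ | ⟨k, rfl⟩
  · obtain ⟨k, rfl⟩ : ∃ l : Fin n, l.castSucc = k := Fin.exists_castSucc_eq.mpr fun hk => by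
      subst hk
      exact absurd hij (not_lt.mpr (Fin.le_iff_val_le_val.mpr (by simp; omega)))
    exact ⟨k, rfl⟩
  · exact absurd ⟨_, valley_castSucc_lt_peak k, ((upDown_iff.mp hσ) k).1⟩ hmin

theorem matches1_valley_iff (hσ : UpDown σ) (k : Fin n) :
    Matches1 σ (valley k.castSucc) ↔ ∀ j < valley k.castSucc, σ (valley k.castSucc) < σ j := by
  refine ⟨fun h j hj => ?_, fun h => ⟨⟨_, valley_castSucc_lt_peak k, ((upDown_iff.mp hσ) k).1⟩,
    fun ⟨j, hj, hlt⟩ => lt_asymm hlt (h j hj)⟩⟩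
  refine lt_of_le_of_ne (not_lt.mp fun hlt => h.2 ⟨j, hj, hlt⟩) fun heq => hj.ne' ?_
  exact σ.injective heq

theorem mmp1_eq_ncard (hσ : UpDown σ) :
    mmp1 σ = {k : Fin n | Matches1 σ (valley k.castSucc)}.ncard := by
  have hinj : Injective fun k : Fin n => valley k.castSucc :=
    valley_strictMono.injective.comp (Fin.castSucc_injective n)
  rw [mmp1, ← Set.ncard_image_of_injective _ hinj]
  congr 1
  ext i
  refine ⟨fun hi => ?_, fun ⟨k, hk, hki⟩ => hki ▸ hk⟩
  obtain ⟨k, rfl⟩ := hσ.exists_valley_eq_of_matches1 hi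
  exact ⟨k, hi, rfl⟩

theorem mmp1_le (hσ : UpDown σ) : mmp1 σ ≤ n :=
  hσ.mmp1_eq_ncard ▸ (Set.ncard_le_card _).trans_eq (Nat.card_fin n)

theorem mmp1_eq_iff (hσ : UpDown σ) :
    mmp1 σ = n ↔ StrictAnti fun k : Fin n => σ (valley k.castSucc) := by
  have hall := Set.eq_univ_iff_ncard {k : Fin n | Matches1 σ (valley k.castSucc)}
  rw [Nat.card_fin] at hall
  rw [hσ.mmp1_eq_ncard, ← hall, Set.eq_univ_iff_forall]
  simp only [Set.mem_ofPred_eq, hσ.matches1_valley_iff]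
  refine ⟨fun h k l hkl => h l _ (valley_strictMono (Fin.castSucc_lt_castSucc_iff.mpr hkl)),
    fun hanti k j hj => ?_⟩
  rcases valley_or_peak j with ⟨c, rfl⟩ | ⟨c, rfl⟩
  · have hck : c < k.castSucc := valley_strictMono.lt_iff_lt.mp hj
    obtain ⟨c, rfl⟩ : ∃ l : Fin n, l.castSucc = c :=
      Fin.exists_castSucc_eq.mpr (hck.trans (Fin.castSucc_lt_last k)).ne
    exact hanti (Fin.castSucc_lt_castSucc_iff.mp hck)
  · have hck : c < k := by
      rw [Fin.lt_def] at hj ⊢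
      simp only [val_peak, val_valley, Fin.val_castSucc] at hj
      omega
    exact (hanti hck).trans ((upDown_iff.mp hσ) c).1

end UpDown

theorem upDown_and_mmp1_eq_iff {m : ℕ} (σ : Equiv.Perm (Fin (2 * (m + 1) + 1))) :
    UpDown σ ∧ mmp1 σ = m + 1 ↔ (∀ k : Fin (m + 1), σ (valley k.castSucc) < σ (peak k)) ∧
      (StrictAnti fun k : Fin (m + 1) => σ (valley k.castSucc)) ∧
      σ (valley (Fin.last (m + 1))) < σ (peak (Fin.last m)) := by
  refine ⟨fun ⟨hσ, hmmp⟩ => ?_, fun ⟨hlt, hanti, hlast⟩ => ?_⟩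
  · have h := upDown_iff.mp hσ
    exact ⟨fun k => (h k).1, hσ.mmp1_eq_iff.mp hmmp, Fin.succ_last m ▸ (h (Fin.last m)).2⟩
  · have hσ : UpDown σ := by
      refine upDown_iff.mpr fun k => ⟨hlt k, ?_⟩
      induction k using Fin.lastCases with
      | last => rwa [Fin.succ_last]
      | cast k =>
        rw [Fin.succ_castSucc]
        exact (hanti (Fin.castSucc_lt_succ (i := k))).trans (hlt _)
    exact ⟨hσ, hσ.mmp1_eq_iff.mpr hanti⟩

theorem oddDF_succ (m : ℕ) : oddDF (m + 1) = (2 * m + 1) * oddDF m := by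
  rw [oddDF, prod_range_succ, mul_comm, oddDF]

section PairSeq

variable {α : Type*} [LinearOrder α] {m : ℕ}

/-- `g` lists a perfect matching of `s` as pairs `g i 0 < g i 1`, ordered by decreasing
smaller element. -/
structure IsPairSeq (s : Finset α) (g : Fin m → Fin 2 → α) : Prop where
  injective : Injective (uncurry g)
  mem : ∀ i j, g i j ∈ s
  lt : ∀ i, g i 0 < g i 1
  strictAnti : StrictAnti fun i => g i 0

namespace IsPairSeq

variable {s : Finset α} {g : Fin m → Fin 2 → α}

theorem eq_of_apply_eq (h : IsPairSeq s g) {i i' : Fin m} {j j' : Fin 2}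
    (heq : g i j = g i' j') : i = i' ∧ j = j' :=
  Prod.ext_iff.mp (h.injective (a₁ := (i, j)) (a₂ := (i', j')) heq)

theorem fst_le (h : IsPairSeq s g) (i : Fin m) (j : Fin 2) : g i 0 ≤ g i j := by
  fin_cases j
  · exact le_rfl
  · exact (h.lt i).le

theorem exists_eq (h : IsPairSeq s g) (hs : s.card = 2 * m) {a : α} (ha : a ∈ s) :
    ∃ i j, g i j = a := by
  have himage : univ.image (uncurry g) = s := by
    refine eq_of_subset_of_card_le (fun _ hx => ?_) ?_
    · obtain ⟨⟨i, j⟩, -, rfl⟩ := mem_image.mp hx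
      exact h.mem i j
    · rw [card_image_of_injective _ h.injective, hs, card_univ, Fintype.card_prod,
        Fintype.card_fin, Fintype.card_fin, mul_comm]
  obtain ⟨⟨i, j⟩, -, hij⟩ := mem_image.mp (himage ▸ ha)
  exact ⟨i, j, hij⟩

theorem last_zero {g : Fin (m + 1) → Fin 2 → α} (h : IsPairSeq s g) (hs : s.card = 2 * (m + 1))
    {a : α} (ha : IsLeast (s : Set α) a) : g (Fin.last m) 0 = a := by
  obtain ⟨i, j, rfl⟩ := h.exists_eq hs ha.1
  exact le_antisymm ((h.strictAnti.antitone (Fin.le_last i)).trans (h.fst_le i j))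
    (ha.2 (h.mem _ _))

theorem init {g : Fin (m + 1) → Fin 2 → α} (h : IsPairSeq s g) :
    IsPairSeq ((s.erase (g (Fin.last m) 0)).erase (g (Fin.last m) 1)) (Fin.init g) := by
  have hne : ∀ i : Fin m, ∀ j k, g i.castSucc j ≠ g (Fin.last m) k := fun i j k heq =>
    (Fin.castSucc_lt_last i).ne (h.eq_of_apply_eq heq).1
  refine ⟨fun x y hxy => ?_, fun i j => ?_, fun i => h.lt _, fun i k hik => h.strictAnti ?_⟩
  · obtain ⟨hi, hj⟩ := h.eq_of_apply_eq hxy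
    exact Prod.ext (Fin.castSucc_injective _ hi) hj
  · exact mem_erase.mpr ⟨hne i j 1, mem_erase.mpr ⟨hne i j 0, h.mem _ _⟩⟩
  · exact Fin.castSucc_lt_castSucc_iff.mpr hik

theorem snoc {a q : α} (h : IsPairSeq ((s.erase a).erase q) g) (ha : IsLeast (s : Set α) a)
    (hq : q ∈ s) (haq : a < q) :
    IsPairSeq s (Fin.snoc g ![a, q] : Fin (m + 1) → Fin 2 → α) := by
  have hmem : ∀ i j, g i j ≠ q ∧ g i j ≠ a ∧ g i j ∈ s := fun i j => by
    simpa only [mem_erase] using h.mem i j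
  have hlast : ∀ j, (![a, q] : Fin 2 → α) j ∈ s ∧ ∀ i k, g i k ≠ ![a, q] j := fun j => by
    fin_cases j
    · exact ⟨ha.1, fun i k => (hmem i k).2.1⟩
    · exact ⟨hq, fun i k => (hmem i k).1⟩
  refine ⟨?_, fun i j => ?_, fun i => ?_, fun i k hik => ?_⟩
  · rintro ⟨i, j⟩ ⟨i', j'⟩ heq
    induction i using Fin.lastCases <;> induction i' using Fin.lastCases <;>
      simp only [uncurry_apply_pair, Fin.snoc_castSucc, Fin.snoc_last] at heq
    · fin_cases j <;> fin_cases j' <;> simp_all [haq.ne, haq.ne']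
    · exact absurd heq.symm ((hlast j).2 _ _)
    · exact absurd heq ((hlast j').2 _ _)
    · obtain ⟨hi, hj⟩ := h.eq_of_apply_eq heq
      rw [hi, hj]
  · induction i using Fin.lastCases
    · simpa only [Fin.snoc_last] using (hlast j).1
    · simpa only [Fin.snoc_castSucc] using (hmem _ j).2.2
  · induction i using Fin.lastCases
    · simpa only [Fin.snoc_last, Matrix.cons_val_zero, Matrix.cons_val_one] using haq
    · simpa only [Fin.snoc_castSucc] using h.lt _
  · induction k using Fin.lastCases with
    | last =>
      obtain ⟨i, rfl⟩ := Fin.exists_castSucc_eq.mpr hik.ne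
      simp only [Fin.snoc_castSucc, Fin.snoc_last]
      exact lt_of_le_of_ne' (ha.2 (hmem i 0).2.2) (hmem i 0).2.1
    | cast k =>
      obtain ⟨i, rfl⟩ := Fin.exists_castSucc_eq.mpr (hik.trans (Fin.castSucc_lt_last k)).ne
      simp only [Fin.snoc_castSucc]
      exact h.strictAnti (Fin.castSucc_lt_castSucc_iff.mp hik)

end IsPairSeq

section Counting

variable [Fintype α]
open scoped Classical

theorem card_isPairSeq_last_eq {s : Finset α} {a q : α} (ha : IsLeast (s : Set α) a)
    (hq : q ∈ s) (haq : a < q) :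
    #{g : Fin (m + 1) → Fin 2 → α | IsPairSeq s g ∧ g (Fin.last m) = ![a, q]} =
      #{g : Fin m → Fin 2 → α | IsPairSeq ((s.erase a).erase q) g} := by
  refine card_nbij' Fin.init (Fin.snoc · ![a, q]) (fun g hg => ?_) (fun g hg => ?_)
    (fun g hg => ?_) (fun g _ => Fin.init_snoc _ _)
  · simp only [coe_filter, mem_univ, true_and, Set.mem_ofPred_eq] at hg ⊢
    simpa [hg.2] using hg.1.init
  · simp only [coe_filter, mem_univ, true_and, Set.mem_ofPred_eq] at hg ⊢
    exact ⟨hg.snoc ha hq haq, Fin.snoc_last _ _⟩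
  · simp only [coe_filter, mem_univ, true_and, Set.mem_ofPred_eq] at hg
    rw [← hg.2]
    exact Fin.snoc_init_self g

theorem card_isPairSeq_filter_last_one (P : α → Prop) [DecidablePred P] {s : Finset α} {a : α}
    (ha : IsLeast (s : Set α) a) (hs : s.card = 2 * (m + 1))
    (hcard : ∀ t : Finset α, t.card = 2 * m → #{g : Fin m → Fin 2 → α | IsPairSeq t g} = oddDF m) :
    #{g : Fin (m + 1) → Fin 2 → α | IsPairSeq s g ∧ P (g (Fin.last m) 1)} =
      #{q ∈ s.erase a | P q} * oddDF m := by
  rw [card_eq_sum_card_fiberwise (f := fun g => g (Fin.last m) 1) (t := {q ∈ s.erase a | P q})]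
  · rw [← smul_eq_mul, ← sum_const]
    refine sum_congr rfl fun q hq => ?_
    obtain ⟨hqa, hqs⟩ := mem_erase.mp (mem_filter.mp hq).1
    have haq : a < q := lt_of_le_of_ne' (ha.2 hqs) hqa
    have hcard' : ((s.erase a).erase q).card = 2 * m := by
      rw [card_erase_of_mem (mem_erase.mpr ⟨haq.ne', hqs⟩), card_erase_of_mem ha.1, hs]
      omega
    rw [filter_filter, ← hcard _ hcard', ← card_isPairSeq_last_eq ha hqs haq]
    congr 1
    refine filter_congr fun g _ => ⟨fun ⟨⟨hg, _⟩, hgq⟩ => ⟨hg, ?_⟩, fun ⟨hg, hgq⟩ => ?_⟩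
    · ext j
      fin_cases j
      · exact hg.last_zero hs ha
      · exact hgq
    · have hgq' : g (Fin.last m) 1 = q := by simp [hgq]
      exact ⟨⟨hg, hgq' ▸ (mem_filter.mp hq).2⟩, hgq'⟩
  · intro g hg
    simp only [coe_filter, mem_univ, true_and, Set.mem_ofPred_eq] at hg ⊢
    refine ⟨mem_erase.mpr ⟨?_, hg.1.mem _ _⟩, hg.2⟩
    rw [← hg.1.last_zero hs ha]
    exact (hg.1.lt _).ne'

theorem card_isPairSeq {s : Finset α} (hs : s.card = 2 * m) :
    #{g : Fin m → Fin 2 → α | IsPairSeq s g} = oddDF m := by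
  induction m generalizing s with
  | zero =>
    rw [filter_true_of_mem fun g _ => ⟨fun x => x.1.elim0, fun i => i.elim0, fun i => i.elim0,
      fun i => i.elim0⟩]
    simp [oddDF]
  | succ m ih =>
    obtain ⟨a, ha⟩ : ∃ a, IsLeast (s : Set α) a :=
      ⟨s.min' (card_pos.mp (by omega)), isLeast_min' _ _⟩
    have := card_isPairSeq_filter_last_one (fun _ => True) ha hs (fun t ht => ih ht)
    simp only [and_true, filter_true] at this
    rw [this, card_erase_of_mem ha.1, hs, oddDF_succ]
    congr 1

end Counting

end PairSeq

section SplitPairs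

variable {n : ℕ} {β : Type*}

/-- `(k, b) ↦ 2k + b`. -/
def pairIndex (n : ℕ) : Fin n × Fin 2 ≃ Fin (2 * n) :=
  finProdFinEquiv.trans (finCongr (Nat.mul_comm n 2))

theorem castSucc_pairIndex_zero (k : Fin n) : (pairIndex n (k, 0)).castSucc = valley k.castSucc :=
  Fin.ext (by simp [pairIndex, finProdFinEquiv])

theorem castSucc_pairIndex_one (k : Fin n) : (pairIndex n (k, 1)).castSucc = peak k :=
  Fin.ext (by simp [pairIndex, finProdFinEquiv]; ring)

def splitPairs : (Fin (2 * n + 1) → β) ≃ (Fin n → Fin 2 → β) × β where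
  toFun f := (fun k b => f (pairIndex n (k, b)).castSucc, f (Fin.last _))
  invFun x := Fin.snoc (uncurry x.1 ∘ (pairIndex n).symm) x.2
  left_inv f := by
    ext i
    induction i using Fin.lastCases with
    | last => simp
    | cast i =>
      obtain ⟨⟨k, b⟩, rfl⟩ := (pairIndex n).surjective i
      simp
  right_inv x := by simp

@[simp] theorem splitPairs_fst_zero (f : Fin (2 * n + 1) → β) (k : Fin n) :
    (splitPairs f).1 k 0 = f (valley k.castSucc) :=
  congrArg f (castSucc_pairIndex_zero k)

@[simp] theorem splitPairs_fst_one (f : Fin (2 * n + 1) → β) (k : Fin n) :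
    (splitPairs f).1 k 1 = f (peak k) :=
  congrArg f (castSucc_pairIndex_one k)

@[simp] theorem splitPairs_snd (f : Fin (2 * n + 1) → β) :
    (splitPairs f).2 = f (valley (Fin.last n)) :=
  congrArg f (Fin.ext (by simp))

theorem injective_iff_splitPairs (f : Fin (2 * n + 1) → β) :
    Injective f ↔
      Injective (uncurry (splitPairs f).1) ∧ ∀ k b, (splitPairs f).1 k b ≠ (splitPairs f).2 := by
  have hsnoc := Fin.snoc_injective_iff (x := Fin.init f) (x₀ := f (Fin.last _))
  rw [Fin.snoc_init_self] at hsnoc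
  have huncurry : uncurry (splitPairs f).1 = Fin.init f ∘ pairIndex n := rfl
  rw [hsnoc, huncurry, Equiv.injective_comp, ← (pairIndex n).surjective.range_comp]
  simp only [Set.mem_range, comp_apply, not_exists, Prod.forall]
  rfl

end SplitPairs

theorem ncard_perm_splitPairs {n : ℕ}
    {P : (Fin n → Fin 2 → Fin (2 * n + 1)) × Fin (2 * n + 1) → Prop}
    (hP : ∀ x, P x → Injective (uncurry x.1) ∧ ∀ k b, x.1 k b ≠ x.2) :
    {σ : Equiv.Perm (Fin (2 * n + 1)) | P (splitPairs σ)}.ncard = {x | P x}.ncard := by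
  rw [← Set.ncard_image_of_injective _ (splitPairs.injective.comp DFunLike.coe_injective)]
  congr 1
  ext x
  refine ⟨fun ⟨σ, hσ, hσx⟩ => hσx ▸ hσ, fun hx => ?_⟩
  have hinj : Injective (splitPairs.symm x) :=
    (injective_iff_splitPairs _).mpr (by simpa using hP x hx)
  exact ⟨Equiv.ofBijective _ (Finite.injective_iff_bijective.mp hinj), by simpa using hx, by simp⟩

def IsPairSeqWithLast (m : ℕ)
    (x : (Fin (m + 1) → Fin 2 → Fin (2 * (m + 1) + 1)) × Fin (2 * (m + 1) + 1)) : Prop :=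
  IsPairSeq (univ.erase x.2) x.1 ∧ x.2 < x.1 (Fin.last m) 1

theorem upDown_and_mmp1_eq_iff_isPairSeqWithLast {m : ℕ}
    (σ : Equiv.Perm (Fin (2 * (m + 1) + 1))) :
    UpDown σ ∧ mmp1 σ = m + 1 ↔ IsPairSeqWithLast m (splitPairs σ) := by
  obtain ⟨hinj, hne⟩ := (injective_iff_splitPairs σ).mp σ.injective
  rw [upDown_and_mmp1_eq_iff]
  constructor
  · rintro ⟨hlt, hanti, hlast⟩
    exact ⟨⟨hinj, fun k b => mem_erase.mpr ⟨hne k b, mem_univ _⟩, by simpa using hlt,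
      by simpa using hanti⟩, by simpa using hlast⟩
  · rintro ⟨h, hlast⟩
    exact ⟨by simpa using h.lt, by simpa using h.strictAnti, by simpa using hlast⟩

section FiberCounts

open scoped Classical

variable {m : ℕ}

theorem card_isPairSeq_erase_zero :
    #{g : Fin (m + 1) → Fin 2 → Fin (2 * (m + 1) + 1) |
      IsPairSeq (univ.erase 0) g ∧ 0 < g (Fin.last m) 1} = (2 * m + 1) * oddDF m := by
  have hleast :
      IsLeast (univ.erase (0 : Fin (2 * (m + 1) + 1)) : Set (Fin (2 * (m + 1) + 1))) 1 := by
    refine ⟨by simp, fun q hq => Fin.one_le_of_ne_zero ?_⟩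
    simpa using hq
  have hpartners : {q ∈ (univ.erase (0 : Fin (2 * (m + 1) + 1))).erase 1 | 0 < q} = Ioi 1 := by
    ext q
    simp only [mem_filter, mem_erase, mem_univ, mem_Ioi, and_true]
    refine ⟨fun ⟨⟨h1, _⟩, h0⟩ => lt_of_le_of_ne (Fin.one_le_of_ne_zero h0.ne') (Ne.symm h1),
      fun h => ?_⟩
    have h0 : 0 < q := lt_of_le_of_lt (Fin.zero_le _) h
    exact ⟨⟨h.ne', h0.ne'⟩, h0⟩
  rw [card_isPairSeq_filter_last_one _ hleast (by simp) fun _ ht => card_isPairSeq ht,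
    hpartners, Fin.card_Ioi, Fin.val_one', Nat.one_mod_eq_one.mpr (by omega)]
  congr 1

theorem card_isPairSeq_erase_succ (j : Fin (2 * (m + 1))) :
    #{g : Fin (m + 1) → Fin 2 → Fin (2 * (m + 1) + 1) |
      IsPairSeq (univ.erase j.succ) g ∧ j.succ < g (Fin.last m) 1} = (2 * m + 1 - j) * oddDF m := by
  have hleast : IsLeast (univ.erase j.succ : Set (Fin (2 * (m + 1) + 1))) 0 :=
    ⟨by simpa using (Fin.succ_ne_zero j).symm, fun q _ => Fin.zero_le q⟩
  have hpartners : {q ∈ (univ.erase j.succ).erase 0 | j.succ < q} = Ioi j.succ := by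
    ext q
    simp only [mem_filter, mem_erase, mem_univ, mem_Ioi, and_true]
    exact ⟨fun h => h.2, fun h => ⟨⟨(lt_of_le_of_lt (Fin.zero_le _) h).ne', h.ne'⟩, h⟩⟩
  rw [card_isPairSeq_filter_last_one _ hleast (by simp) fun _ ht => card_isPairSeq ht,
    hpartners, Fin.card_Ioi, Fin.val_succ]
  congr 1
  omega

end FiberCounts

theorem sum_two_mul_add_one_sub (m : ℕ) :
    ∑ j : Fin (2 * (m + 1)), (2 * m + 1 - j : ℕ) = (m + 1) * (2 * m + 1) := by
  have hreflect := sum_range_reflect id (2 * (m + 1))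
  have hgauss := sum_range_id_mul_two (2 * (m + 1))
  have htwo : 2 * (m + 1) - 1 = 2 * m + 1 := by omega
  simp only [id, htwo] at hreflect hgauss
  rw [Fin.sum_univ_eq_sum_range (fun j => 2 * m + 1 - j), hreflect]
  linarith

open scoped Classical in
theorem ncard_isPairSeqWithLast (m : ℕ) :
    {x | IsPairSeqWithLast m x}.ncard = (m + 2) * oddDF (m + 1) := by
  simp only [IsPairSeqWithLast]
  rw [Set.ncard_eq_toFinset_card', Set.toFinset_ofPred, card_filter, Fintype.sum_prod_type_right]
  simp only [← card_filter]
  rw [Fin.sum_univ_succ, card_isPairSeq_erase_zero]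
  simp only [card_isPairSeq_erase_succ, ← sum_mul, sum_two_mul_add_one_sub, oddDF_succ]
  ring

theorem stmt12 (n : ℕ) (hn : 1 ≤ n) :
    (∀ σ : Equiv.Perm (Fin (2*n+1)), UpDown σ → mmp1 σ ≤ n) ∧
    {σ : Equiv.Perm (Fin (2*n+1)) | UpDown σ ∧ mmp1 σ = n}.ncard = (n+1) * oddDF n := by
  obtain ⟨m, rfl⟩ := Nat.exists_eq_add_of_le' hn
  refine ⟨fun σ hσ => hσ.mmp1_le, ?_⟩
  calc {σ : Equiv.Perm (Fin (2 * (m + 1) + 1)) | UpDown σ ∧ mmp1 σ = m + 1}.ncard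
      = {σ : Equiv.Perm (Fin (2 * (m + 1) + 1)) | IsPairSeqWithLast m (splitPairs σ)}.ncard := by
        simp only [upDown_and_mmp1_eq_iff_isPairSeqWithLast]
    _ = {x | IsPairSeqWithLast m x}.ncard :=
        ncard_perm_splitPairs fun _ hx =>
          ⟨hx.1.injective, fun k b => (mem_erase.mp (hx.1.mem k b)).1⟩
    _ = (m + 1 + 1) * oddDF (m + 1) := ncard_isPairSeqWithLast m
end

section
/- For every n ≥ 2: every down-up permutation σ of length 2n+1 satisfies mmp^{(1,0,∅,0)}(σ) ≤ n+1, and the number of down-up permutations σ of length 2n+1 with mmp^{(1,0,∅,0)}(σ) = n+1 equals (2n)!! − (2n−1)!!. (Equivalently, the highest power of x appearing in D^{(1,0,∅,0)}_{2n+1}(x) is x^{n+1}, with coefficient (2n)!! − (2n−1)!!.) -/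
/-!
In a down-up permutation an entry at a positive even position has a smaller left neighbour, so
only position `0` and the `n` odd positions can match `MMP(1,0,∅,0)`; hence `mmp ≤ n + 1`. All of
them match exactly when every odd-position entry `σ_p` is the minimum of `σ_0, …, σ_{p+1}` and
`σ_0` is not the maximum. Such arrangements of a set of size `M + 2` are those of size `M`
followed by the minimum and then any of the `M + 1` remaining values, which gives `(2n)!!` of
them; requiring `σ_0` to be the maximum also forbids the maximum as last entry, which gives
`(2n-1)!!`.
-/

open Finset Equiv

lemma injective_vec_two_iff {β : Type*} (a b : β) : Function.Injective ![a, b] ↔ a ≠ b := by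
  rw [Function.Injective, Fin.forall_fin_two, Fin.forall_fin_two, Fin.forall_fin_two]
  simp [eq_comm]

lemma append_castAdd_vec_natAdd {β : Type*} {M : ℕ} (f : Fin (M + 2) → β) :
    Fin.append (fun i => f (Fin.castAdd 2 i)) ![f (Fin.natAdd M 0), f (Fin.natAdd M 1)] = f := by
  conv_rhs => rw [← Fin.append_castAdd_natAdd (f := f)]
  congr 1
  ext i
  fin_cases i <;> rfl

lemma card_erase_erase_of_mem {β : Type*} [DecidableEq β] {s : Finset β} {a b : β} {M : ℕ}
    (ha : a ∈ s) (hb : b ∈ s.erase a) (hs : s.card = M + 2) : ((s.erase a).erase b).card = M := by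
  rw [card_erase_of_mem hb, card_erase_of_mem ha, hs]
  rfl

section Arrangements

variable {α : Type*} [LinearOrder α]

def OddPrefixMin {m : ℕ} (f : Fin m → α) : Prop :=
  ∀ p j : Fin m, Odd (p : ℕ) → (j : ℕ) ≤ p + 1 → f p ≤ f j

def FirstIsMax {m : ℕ} (f : Fin m → α) : Prop :=
  ∀ i j : Fin m, (j : ℕ) = 0 → f i ≤ f j

instance {m : ℕ} : DecidablePred (FirstIsMax (α := α) (m := m)) :=
  fun f => by unfold FirstIsMax; infer_instance

open Classical in
/-- When `s.card = m`, these are the bijections `Fin m → s`. -/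
noncomputable def oddPrefixMinArrangements (m : ℕ) (s : Finset α) : Finset (Fin m → α) :=
  (Fintype.piFinset fun _ => s).filter fun f => Function.Injective f ∧ OddPrefixMin f

lemma mem_oddPrefixMinArrangements {m : ℕ} {s : Finset α} {f : Fin m → α} :
    f ∈ oddPrefixMinArrangements m s ↔
      (∀ i, f i ∈ s) ∧ Function.Injective f ∧ OddPrefixMin f := by
  simp [oddPrefixMinArrangements]

lemma exists_apply_eq_of_mem_oddPrefixMinArrangements {m : ℕ} {s : Finset α} (hs : s.card = m)
    {f : Fin m → α} (hf : f ∈ oddPrefixMinArrangements m s) {x : α} (hx : x ∈ s) :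
    ∃ i, f i = x := by
  rw [mem_oddPrefixMinArrangements] at hf
  obtain ⟨i, -, hi⟩ := surj_on_of_inj_on_of_card_le (s := univ) (fun i _ => f i)
    (fun i _ => hf.1 i) (fun _ _ _ _ h => hf.2.1 h) (by simp [hs]) x hx
  exact ⟨i, hi.symm⟩

lemma oddPrefixMinArrangements_one (x : α) :
    oddPrefixMinArrangements 1 {x} = {fun _ => x} := by
  ext f
  simp only [mem_oddPrefixMinArrangements, mem_singleton, funext_iff]
  refine ⟨fun h => h.1, fun h => ⟨h, Function.injective_of_subsingleton f, ?_⟩⟩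
  intro p _ hp
  simp at hp

lemma firstIsMax_iff {m : ℕ} (hm : 0 < m) (f : Fin m → α) :
    FirstIsMax f ↔ ∀ i, f i ≤ f ⟨0, hm⟩ :=
  ⟨fun h i => h i _ rfl, fun h i j hj => (Fin.ext hj : j = ⟨0, hm⟩) ▸ h i⟩

variable {M : ℕ}

lemma oddPrefixMin_append_iff (hM : Odd M) (g : Fin M → α) (a b : α) :
    OddPrefixMin (Fin.append g ![a, b]) ↔
      OddPrefixMin g ∧ ∀ j, a ≤ Fin.append g ![a, b] j := by
  constructor
  · intro hf
    refine ⟨fun p j hp hj => ?_, fun j => ?_⟩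
    · simpa using hf (Fin.castAdd 2 p) (Fin.castAdd 2 j) hp hj
    · simpa using hf (Fin.natAdd M 0) j hM (by simp; omega)
  · rintro ⟨hg, ha⟩ p j hp hj
    induction p using Fin.addCases with
    | left p =>
      have hjM : (j : ℕ) < M := by
        simp only [Fin.val_castAdd] at hp hj
        obtain ⟨r, hr⟩ := hp; obtain ⟨q, hq⟩ := hM; omega
      rw [show j = Fin.castAdd 2 ⟨j, hjM⟩ from rfl, Fin.append_left, Fin.append_left]
      exact hg _ _ hp hj
    | right r =>
      fin_cases r
      · simpa using ha j
      · exact absurd hp (by simpa [Nat.odd_add_one] using hM)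

lemma firstIsMax_append_iff (hM : 0 < M) (g : Fin M → α) (a b : α) :
    FirstIsMax (Fin.append g ![a, b]) ↔
      FirstIsMax g ∧ a ≤ g ⟨0, hM⟩ ∧ b ≤ g ⟨0, hM⟩ := by
  have h0 : Fin.append g ![a, b] ⟨0, by omega⟩ = g ⟨0, hM⟩ :=
    Fin.append_left g ![a, b] ⟨0, hM⟩
  rw [firstIsMax_iff hM, firstIsMax_iff (by omega), Fin.forall_fin_add, Fin.forall_fin_two, h0]
  simp

lemma append_mem_oddPrefixMinArrangements_iff (hM : Odd M) {s : Finset α} {a : α}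
    (ha : IsLeast (s : Set α) a) (g : Fin M → α) (b : α) :
    Fin.append g ![a, b] ∈ oddPrefixMinArrangements (M + 2) s ↔
      b ∈ s.erase a ∧ g ∈ oddPrefixMinArrangements M ((s.erase a).erase b) := by
  simp only [mem_oddPrefixMinArrangements, Fin.forall_fin_add, Fin.append_left, Fin.append_right,
    Fin.forall_fin_two, Matrix.cons_val_zero, Matrix.cons_val_one, Fin.append_injective_iff,
    injective_vec_two_iff, oddPrefixMin_append_iff hM, mem_erase]
  constructor
  · rintro ⟨⟨hgs, -, hb⟩, ⟨hg, hab, hgab⟩, hopm, -⟩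
    exact ⟨⟨hab.symm, hb⟩, fun i => ⟨(hgab i).2, (hgab i).1, hgs i⟩, hg, hopm⟩
  · rintro ⟨⟨hba, hb⟩, hgs, hg, hopm⟩
    exact ⟨⟨fun i => (hgs i).2.2, ha.1, hb⟩,
      ⟨hg, Ne.symm hba, fun i => ⟨(hgs i).2.1, (hgs i).1⟩⟩, hopm, fun i => ha.2 (hgs i).2.2,
      le_rfl, ha.2 hb⟩

lemma apply_natAdd_zero_of_mem_oddPrefixMinArrangements (hM : Odd M) {s : Finset α} {a : α}
    (hs : s.card = M + 2) (ha : IsLeast (s : Set α) a) {f : Fin (M + 2) → α}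
    (hf : f ∈ oddPrefixMinArrangements (M + 2) s) : f (Fin.natAdd M 0) = a := by
  obtain ⟨i, rfl⟩ := exists_apply_eq_of_mem_oddPrefixMinArrangements hs hf ha.1
  rw [mem_oddPrefixMinArrangements] at hf
  exact le_antisymm (hf.2.2 _ i hM (by simp; omega)) (ha.2 (hf.1 _))

/-- The minimum `a` of `s` is forced into position `M`, so dropping the last two entries is a
bijection onto the pairs (last entry, arrangement of the remaining values). -/
lemma card_filter_oddPrefixMinArrangements_add_two (hM : Odd M) {s : Finset α} {a : α}
    (hs : s.card = M + 2) (ha : IsLeast (s : Set α) a) (P : (Fin (M + 2) → α) → Prop)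
    [DecidablePred P] :
    ((oddPrefixMinArrangements (M + 2) s).filter P).card =
      ∑ b ∈ s.erase a, ((oddPrefixMinArrangements M ((s.erase a).erase b)).filter
        fun g => P (Fin.append g ![a, b])).card := by
  rw [← card_sigma]
  symm
  refine card_nbij' (fun x => Fin.append x.2 ![a, x.1])
    (fun f => ⟨f (Fin.natAdd M 1), fun i => f (Fin.castAdd 2 i)⟩) ?_ ?_ ?_ ?_
  · rintro ⟨b, g⟩ hbg
    simp only [coe_sigma, Set.mem_sigma_iff, coe_filter, Set.mem_ofPred_eq] at hbg ⊢
    exact ⟨(append_mem_oddPrefixMinArrangements_iff hM ha g b).2 ⟨hbg.1, hbg.2.1⟩, hbg.2.2⟩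
  · intro f hf
    simp only [coe_filter, Set.mem_ofPred_eq] at hf
    have hfa := apply_natAdd_zero_of_mem_oddPrefixMinArrangements hM hs ha hf.1
    rw [← append_castAdd_vec_natAdd f, hfa, append_mem_oddPrefixMinArrangements_iff hM ha] at hf
    simp only [coe_sigma, Set.mem_sigma_iff, coe_filter, Set.mem_ofPred_eq]
    exact ⟨hf.1.1, hf.1.2, hf.2⟩
  · rintro ⟨b, g⟩ -
    simp
  · intro f hf
    simp only [coe_filter, Set.mem_ofPred_eq] at hf
    have hfa := apply_natAdd_zero_of_mem_oddPrefixMinArrangements hM hs ha hf.1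
    dsimp only
    rw [← hfa, append_castAdd_vec_natAdd]

/-- If the last entry `b` is the maximum `c`, the first entry is not; otherwise `c` stays among
the first `M` entries, so `FirstIsMax g` already forces `b ≤ g 0`. -/
lemma card_filter_firstIsMax_append (hM : 0 < M) {s : Finset α} {a b c : α}
    (ha : IsLeast (s : Set α) a) (hc : IsGreatest (s : Set α) c) (hb : b ∈ s.erase a)
    (ht : ((s.erase a).erase b).card = M) :
    ((oddPrefixMinArrangements M ((s.erase a).erase b)).filter
        fun g => FirstIsMax (Fin.append g ![a, b])).card =
      if b = c then 0 else ((oddPrefixMinArrangements M ((s.erase a).erase b)).filter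
        FirstIsMax).card := by
  have hg0 : ∀ g ∈ oddPrefixMinArrangements M ((s.erase a).erase b),
      g ⟨0, hM⟩ ≠ b ∧ g ⟨0, hM⟩ ≠ a ∧ g ⟨0, hM⟩ ∈ s := fun g hg => by
    simpa using (mem_oddPrefixMinArrangements.1 hg).1 ⟨0, hM⟩
  split_ifs with hbc
  · rw [card_eq_zero, filter_eq_empty_iff]
    intro g hg hfm
    rw [firstIsMax_append_iff hM] at hfm
    exact (hg0 g hg).1 (le_antisymm (hbc ▸ hc.2 (hg0 g hg).2.2) hfm.2.2)
  · congr 1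
    refine filter_congr fun g hg => ?_
    rw [firstIsMax_append_iff hM]
    refine ⟨fun h => h.1, fun h => ⟨h, ha.2 (hg0 g hg).2.2, ?_⟩⟩
    have hca : c ≠ a := by
      rintro rfl
      exact (mem_erase.1 hb).1 (le_antisymm (hc.2 (mem_erase.1 hb).2) (ha.2 (mem_erase.1 hb).2))
    obtain ⟨i, hi⟩ := exists_apply_eq_of_mem_oddPrefixMinArrangements ht hg
      (mem_erase.2 ⟨Ne.symm hbc, mem_erase.2 ⟨hca, hc.1⟩⟩)
    calc b ≤ c := hc.2 (mem_erase.1 hb).2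
      _ = g i := hi.symm
      _ ≤ g ⟨0, hM⟩ := (firstIsMax_iff hM g).1 h i

theorem card_oddPrefixMinArrangements (k : ℕ) {s : Finset α} (hs : s.card = 2 * k + 1) :
    (oddPrefixMinArrangements (2 * k + 1) s).card = evenDF k := by
  induction k generalizing s with
  | zero =>
    obtain ⟨x, rfl⟩ := card_eq_one.1 hs
    simp [oddPrefixMinArrangements_one, evenDF]
  | succ k ih =>
    have hne : s.Nonempty := by rw [← card_pos]; omega
    rw [show 2 * (k + 1) + 1 = 2 * k + 1 + 2 by ring] at hs ⊢
    rw [← filter_true (oddPrefixMinArrangements _ s),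
      card_filter_oddPrefixMinArrangements_add_two (odd_two_mul_add_one k) hs (isLeast_min' s hne)]
    simp only [filter_true]
    rw [sum_congr rfl fun b hb => ih (card_erase_erase_of_mem (min'_mem s hne) hb hs), sum_const,
      card_erase_of_mem (min'_mem s hne), hs, evenDF, evenDF, prod_range_succ, smul_eq_mul,
      mul_comm]
    rfl

theorem card_filter_firstIsMax_oddPrefixMinArrangements (k : ℕ) {s : Finset α}
    (hs : s.card = 2 * k + 1) :
    ((oddPrefixMinArrangements (2 * k + 1) s).filter FirstIsMax).card = oddDF k := by
  induction k generalizing s with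
  | zero =>
    obtain ⟨x, rfl⟩ := card_eq_one.1 hs
    have hx : FirstIsMax fun _ : Fin 1 => x := fun _ _ _ => le_rfl
    rw [oddPrefixMinArrangements_one, filter_singleton, if_pos hx]
    rfl
  | succ k ih =>
    have hne : s.Nonempty := by rw [← card_pos]; omega
    rw [show 2 * (k + 1) + 1 = 2 * k + 1 + 2 by ring] at hs ⊢
    have hcard := fun b (hb : b ∈ s.erase (s.min' hne)) =>
      card_erase_erase_of_mem (min'_mem s hne) hb hs
    have hmax : s.max' hne ∈ s.erase (s.min' hne) :=
      mem_erase.2 ⟨(min'_lt_max'_of_card s (by omega)).ne', max'_mem s hne⟩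
    rw [card_filter_oddPrefixMinArrangements_add_two (odd_two_mul_add_one k) hs
        (isLeast_min' s hne),
      sum_congr rfl fun b hb => card_filter_firstIsMax_append (by omega) (isLeast_min' s hne)
        (isGreatest_max' s hne) hb (hcard b hb), ← add_sum_erase _ _ hmax, if_pos rfl, zero_add,
      sum_congr rfl fun b hb => by
        rw [if_neg (ne_of_mem_erase hb), ih (hcard b (mem_of_mem_erase hb))],
      sum_const, card_erase_of_mem hmax, card_erase_of_mem (min'_mem s hne), hs, oddDF, oddDF,
      prod_range_succ, smul_eq_mul, mul_comm]
    rfl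

end Arrangements

section Permutations

lemma ncard_setOf_perm_oddPrefixMin_and (m : ℕ) (Q : (Fin m → Fin m) → Prop)
    [DecidablePred Q] :
    {σ : Perm (Fin m) | OddPrefixMin σ ∧ Q σ}.ncard =
      ((oddPrefixMinArrangements m univ).filter Q).card := by
  have himage : (⇑) '' {σ : Perm (Fin m) | OddPrefixMin σ ∧ Q σ} =
      ((oddPrefixMinArrangements m univ).filter Q : Set (Fin m → Fin m)) := by
    ext f
    simp only [Set.mem_image, Set.mem_ofPred_eq, coe_filter, mem_oddPrefixMinArrangements,
      mem_univ, implies_true, true_and]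
    constructor
    · rintro ⟨σ, ⟨hσ, hQ⟩, rfl⟩
      exact ⟨⟨σ.injective, hσ⟩, hQ⟩
    · rintro ⟨⟨hf, hσ⟩, hQ⟩
      exact ⟨Equiv.ofBijective f (Finite.injective_iff_bijective.1 hf), ⟨hσ, hQ⟩, rfl⟩
  rw [← Set.ncard_coe_finset, ← himage, Set.ncard_image_of_injective _ DFunLike.coe_injective]

variable {m : ℕ}

lemma DownUp.val_eq_zero_or_odd_of_matches1 {σ : Perm (Fin m)} (hσ : DownUp σ) {i : Fin m}
    (hi : Matches1 σ i) : (i : ℕ) = 0 ∨ Odd (i : ℕ) := by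
  by_contra! h
  obtain ⟨k, hk⟩ : ∃ k, (i : ℕ) = 2 * k + 2 := by
    obtain ⟨k, hk⟩ := Nat.not_odd_iff_even.1 h.2
    exact ⟨k - 1, by omega⟩
  have hprev := hσ ⟨2 * k + 1, by omega⟩ (by simp; omega)
  rw [if_neg (by simp)] at hprev
  exact hi.2 ⟨⟨2 * k + 1, by omega⟩, Fin.lt_def.2 (by simp; omega),
    by rwa [show (⟨2 * k + 1 + 1, _⟩ : Fin m) = i from Fin.ext (by simp; omega)] at hprev⟩

lemma DownUp.of_oddPrefixMin {σ : Perm (Fin m)} (hσ : OddPrefixMin σ) : DownUp σ := by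
  intro i hi
  have hne : σ i ≠ σ ⟨i + 1, hi⟩ := σ.injective.ne (Fin.ne_of_val_ne (by simp))
  split_ifs with heven
  · exact (hσ ⟨i + 1, hi⟩ i (by simpa [Nat.odd_add_one]) (by simp; omega)).lt_of_ne hne.symm
  · exact (hσ i ⟨i + 1, hi⟩ (Nat.not_even_iff_odd.1 heven) le_rfl).lt_of_ne hne

lemma matches1_of_oddPrefixMin {σ : Perm (Fin m)} (hσ : OddPrefixMin σ) {i : Fin m}
    (hodd : Odd (i : ℕ)) (hi : (i : ℕ) + 1 < m) : Matches1 σ i := by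
  refine ⟨⟨⟨i + 1, hi⟩, Fin.lt_def.2 (by simp), ?_⟩, fun ⟨j, hji, hj⟩ => ?_⟩
  · exact (hσ i _ hodd le_rfl).lt_of_ne (σ.injective.ne (Fin.ne_of_val_ne (by simp)))
  · exact (hσ i j hodd (by rw [Fin.lt_def] at hji; omega)).not_gt hj

lemma matches1_zero_iff (hm : 0 < m) (σ : Perm (Fin m)) :
    Matches1 σ ⟨0, hm⟩ ↔ ¬ FirstIsMax σ := by
  simp only [Matches1, firstIsMax_iff hm, not_forall, not_le]
  constructor
  · rintro ⟨⟨j, -, hj⟩, -⟩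
    exact ⟨j, hj⟩
  · rintro ⟨j, hj⟩
    refine ⟨⟨j, Fin.lt_def.2 ?_, hj⟩, fun ⟨k, hk, _⟩ => Nat.not_lt_zero _ (Fin.lt_def.1 hk)⟩
    exact Nat.pos_of_ne_zero fun h0 => hj.ne (congrArg σ (Fin.ext h0)).symm

lemma DownUp.oddPrefixMin_of_matches1 {σ : Perm (Fin m)} (hσ : DownUp σ)
    (h : ∀ i : Fin m, Odd (i : ℕ) → Matches1 σ i) : OddPrefixMin σ := by
  intro p j hp hj
  obtain hjp | rfl | hjp : j < p ∨ j = p ∨ (j : ℕ) = p + 1 := by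
    rcases lt_trichotomy j p with h | h | h
    · exact Or.inl h
    · exact Or.inr (Or.inl h)
    · exact Or.inr (Or.inr (by rw [Fin.lt_def] at h; omega))
  · exact not_lt.1 fun hlt => (h p hp).2 ⟨j, hjp, hlt⟩
  · exact le_rfl
  · have := hσ p (by omega)
    rw [if_neg (Nat.not_even_iff_odd.2 hp), show (⟨p + 1, _⟩ : Fin m) = j from Fin.ext hjp.symm]
      at this
    exact this.le

end Permutations

section Candidates

variable {n : ℕ}

def matchCandidates (n : ℕ) : Finset (Fin (2 * n + 1)) :=
  insert 0 (univ.image fun k : Fin n => ⟨2 * k + 1, by omega⟩)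

lemma mem_matchCandidates {i : Fin (2 * n + 1)} :
    i ∈ matchCandidates n ↔ (i : ℕ) = 0 ∨ Odd (i : ℕ) := by
  simp only [matchCandidates, mem_insert, mem_image, mem_univ, true_and, Fin.ext_iff,
    Fin.val_zero]
  exact or_congr_right
    ⟨fun ⟨k, hk⟩ => ⟨k, by omega⟩, fun ⟨r, hr⟩ => ⟨⟨r, by omega⟩, by simp [hr]⟩⟩

lemma card_matchCandidates : (matchCandidates n).card = n + 1 := by
  rw [matchCandidates, card_insert_of_notMem (by simp [Fin.ext_iff]),
    card_image_of_injective _ fun a b h => Fin.ext (by simpa using h), card_univ, Fintype.card_fin]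

lemma DownUp.setOf_matches1_subset {σ : Perm (Fin (2 * n + 1))} (hσ : DownUp σ) :
    {i | Matches1 σ i} ⊆ matchCandidates n :=
  fun _ hi => mem_matchCandidates.2 (hσ.val_eq_zero_or_odd_of_matches1 hi)

lemma DownUp.mmp1_le {σ : Perm (Fin (2 * n + 1))} (hσ : DownUp σ) : mmp1 σ ≤ n + 1 := by
  calc mmp1 σ ≤ (matchCandidates n : Set (Fin (2 * n + 1))).ncard :=
        Set.ncard_le_ncard hσ.setOf_matches1_subset
    _ = n + 1 := by rw [Set.ncard_coe_finset, card_matchCandidates]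

lemma DownUp.mmp1_eq_iff {σ : Perm (Fin (2 * n + 1))} (hσ : DownUp σ) :
    mmp1 σ = n + 1 ↔ ∀ i ∈ matchCandidates n, Matches1 σ i := by
  rw [mmp1, ← card_matchCandidates (n := n), ← Set.ncard_coe_finset]
  refine ⟨fun h i hi => ?_, fun h => ?_⟩
  · have hi' : i ∈ (matchCandidates n : Set (Fin (2 * n + 1))) := hi
    rw [← Set.eq_of_subset_of_ncard_le hσ.setOf_matches1_subset h.ge] at hi'
    exact hi'
  · rw [Set.Subset.antisymm hσ.setOf_matches1_subset h]

lemma downUp_and_mmp1_eq_iff (σ : Perm (Fin (2 * n + 1))) :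
    DownUp σ ∧ mmp1 σ = n + 1 ↔ OddPrefixMin σ ∧ ¬ FirstIsMax σ := by
  constructor
  · rintro ⟨hσ, hmmp⟩
    have hmatch := hσ.mmp1_eq_iff.1 hmmp
    refine ⟨hσ.oddPrefixMin_of_matches1 fun i hi => hmatch i (mem_matchCandidates.2 (Or.inr hi)),
      ?_⟩
    exact (matches1_zero_iff (by omega) σ).1 (hmatch _ (mem_matchCandidates.2 (Or.inl rfl)))
  · rintro ⟨hopm, hfirst⟩
    have hσ := DownUp.of_oddPrefixMin hopm
    refine ⟨hσ, hσ.mmp1_eq_iff.2 fun i hi => ?_⟩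
    rcases mem_matchCandidates.1 hi with h0 | hodd
    · rw [show i = ⟨0, by omega⟩ from Fin.ext h0]
      exact (matches1_zero_iff _ σ).2 hfirst
    · exact matches1_of_oddPrefixMin hopm hodd (by obtain ⟨r, hr⟩ := hodd; omega)

lemma ncard_setOf_perm_oddPrefixMin (n : ℕ) :
    {σ : Perm (Fin (2 * n + 1)) | OddPrefixMin σ}.ncard = evenDF n := by
  simpa [card_oddPrefixMinArrangements n (card_fin _)] using
    ncard_setOf_perm_oddPrefixMin_and (2 * n + 1) fun _ => True

lemma ncard_setOf_perm_oddPrefixMin_firstIsMax (n : ℕ) :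
    {σ : Perm (Fin (2 * n + 1)) | OddPrefixMin σ ∧ FirstIsMax σ}.ncard = oddDF n := by
  rw [ncard_setOf_perm_oddPrefixMin_and,
    card_filter_firstIsMax_oddPrefixMinArrangements n (card_fin _)]

end Candidates

theorem stmt14_general (n : ℕ) :
    (∀ σ : Equiv.Perm (Fin (2*n+1)), DownUp σ → mmp1 σ ≤ n+1) ∧
    ({σ : Equiv.Perm (Fin (2*n+1)) | DownUp σ ∧ mmp1 σ = n+1}.ncard : ℤ)
      = (evenDF n : ℤ) - (oddDF n : ℤ) := by
  refine ⟨fun σ hσ => hσ.mmp1_le, ?_⟩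
  have hsplit : {σ : Equiv.Perm (Fin (2 * n + 1)) | OddPrefixMin σ ∧ FirstIsMax σ}.ncard +
      {σ : Equiv.Perm (Fin (2 * n + 1)) | OddPrefixMin σ ∧ ¬ FirstIsMax σ}.ncard =
      {σ : Equiv.Perm (Fin (2 * n + 1)) | OddPrefixMin σ}.ncard :=
    Set.ncard_inter_add_ncard_sdiff_eq_ncard _ _
  rw [ncard_setOf_perm_oddPrefixMin_firstIsMax, ncard_setOf_perm_oddPrefixMin] at hsplit
  simp only [downUp_and_mmp1_eq_iff]
  omega

theorem stmt14 (n : ℕ) (hn : 2 ≤ n) :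
    (∀ σ : Equiv.Perm (Fin (2*n+1)), DownUp σ → mmp1 σ ≤ n+1) ∧
    ({σ : Equiv.Perm (Fin (2*n+1)) | DownUp σ ∧ mmp1 σ = n+1}.ncard : ℤ)
      = (evenDF n : ℤ) - (oddDF n : ℤ) :=
  stmt14_general n
end
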